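/- Let Γ be a finite simple graph, P and Q disjoint subsets of V(Γ), R ⊆ V(Γ), and P₁ a set of elements of the subgroup ⟨P⟩ of A(Γ). Then ⟨P₁ ∪ Q⟩ ∩ ⟨R⟩ ⊆ ⟨P₁ ∪ (Q∩R)⟩, and if P ⊆ R then equality holds: ⟨P₁ ∪ Q⟩ ∩ ⟨R⟩ = ⟨P₁ ∪ (Q∩R)⟩. -/

import Mathlib

open SimpleGraph

variable {V : Type*}

/-- Relators of the right-angled Artin group on a graph. -/
def raagRels (G : SimpleGraph V) : Set (FreeGroup V) :=
  {r | ∃ a b : V, G.Adj a b ∧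
    r = FreeGroup.of a * FreeGroup.of b * (FreeGroup.of a)⁻¹ * (FreeGroup.of b)⁻¹}

/-- The right-angled Artin group on a graph. -/
def RAAG (G : SimpleGraph V) : Type _ := PresentedGroup (raagRels G)

instance (G : SimpleGraph V) : Group (RAAG G) := by unfold RAAG; infer_instance

/-- The generator of `RAAG G` corresponding to a vertex. -/
def RAAG.gen (G : SimpleGraph V) (v : V) : RAAG G := PresentedGroup.of v

/-- The element of `RAAG G` represented by a word. -/
def wordProd (G : SimpleGraph V) (w : List (V × Bool)) : RAAG G :=
  (w.map fun p => if p.2 then RAAG.gen G p.1 else (RAAG.gen G p.1)⁻¹).prod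

/-- A word is reduced if no shorter word represents the same element. -/
def IsReducedWord (G : SimpleGraph V) (w : List (V × Bool)) : Prop :=
  ∀ w' : List (V × Bool), wordProd G w' = wordProd G w → w.length ≤ w'.length

/-- `B` is anticonnected in `G` if it induces a connected subgraph of the complement. -/
def Anticonnected (G : SimpleGraph V) (B : Set V) : Prop :=
  ((Gᶜ).induce B).Connected

/-- Contraction of a graph relative to a set `B` of vertices: `B` collapses to
the vertex `none`. -/
def SimpleGraph.contract (G : SimpleGraph V) (B : Set V) :
    SimpleGraph (Option {v : V // v ∉ B}) where
  Adj x y :=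
    match x, y with
    | some q, some q' => G.Adj q.1 q'.1
    | some q, none => ∃ b ∈ B, G.Adj q.1 b
    | none, some q => ∃ b ∈ B, G.Adj q.1 b
    | none, none => False
  symm := by
    constructor
    rintro (_|q) (_|q') h
    · exact h
    · exact h
    · exact h
    · exact G.symm.symm _ _ h
  loopless := by
    constructor
    rintro (_|q) h
    · exact h
    · exact G.loopless.irrefl _ h

/-- Co-contraction of a graph relative to a set `B` of vertices: `B` collapses to
the vertex `none`, which is joined to the common neighbors of `B`. -/
def SimpleGraph.coContract (G : SimpleGraph V) (B : Set V) :
    SimpleGraph (Option {v : V // v ∉ B}) where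
  Adj x y :=
    match x, y with
    | some q, some q' => G.Adj q.1 q'.1
    | some q, none => ∀ b ∈ B, G.Adj q.1 b
    | none, some q => ∀ b ∈ B, G.Adj q.1 b
    | none, none => False
  symm := by
    constructor
    rintro (_|q) (_|q') h
    · exact h
    · exact h
    · exact h
    · exact G.symm.symm _ _ h
  loopless := by
    constructor
    rintro (_|q) h
    · exact h
    · exact G.loopless.irrefl _ h

/-- The formal inverse of a word. -/
def wordInv (w : List (V × Bool)) : List (V × Bool) :=
  w.reverse.map fun p => (p.1, !p.2)

/-- The word obtained by concatenating `m` copies of `v` (or `|m|` copies of the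
inverse word when `m < 0`). -/
def wordZPow (v : List (V × Bool)) : ℤ → List (V × Bool)
  | Int.ofNat m => (List.replicate m v).flatten
  | Int.negSucc m => (List.replicate (m + 1) (wordInv v)).flatten

/-- A sequence of vertices of `B` is a contraction sequence if for every pair
`b, b'` of vertices of `B` it has a subsequence which is a path from `b` to `b'`
in the complement graph. -/
def IsContractionSeq (G : SimpleGraph V) (B : Set V) (bs : List V) : Prop :=
  ∀ b ∈ B, ∀ b' ∈ B, ∃ l : List V, l.Sublist bs ∧ l.head? = some b ∧
    l.getLast? = some b' ∧ l.Chain' (fun x y => x ≠ y ∧ ¬ G.Adj x y)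

/-- A contraction word of `B`: a reduced word with letters in `B^{±1}` whose
sequence of letters is a contraction sequence. -/
def IsContractionWord (G : SimpleGraph V) (B : Set V) (w : List (V × Bool)) : Prop :=
  IsReducedWord G w ∧ (∀ p ∈ w, p.1 ∈ B) ∧ IsContractionSeq G B (w.map Prod.fst)

/-- A contraction element of `B` is one represented by a contraction word of `B`. -/
def IsContractionElem (G : SimpleGraph V) (B : Set V) (g : RAAG G) : Prop :=
  ∃ w : List (V × Bool), IsContractionWord G B w ∧ wordProd G w = g

open Classical in
lemma raag_gen_comm (G : SimpleGraph V) {a b : V} (h : G.Adj a b) :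
    RAAG.gen G a * RAAG.gen G b * (RAAG.gen G a)⁻¹ * (RAAG.gen G b)⁻¹ = 1 := by
  have hr : (FreeGroup.of a * FreeGroup.of b * (FreeGroup.of a)⁻¹ * (FreeGroup.of b)⁻¹ :
      FreeGroup V) ∈ Subgroup.normalClosure (raagRels G) :=
    Subgroup.subset_normalClosure ⟨a, b, h, rfl⟩
  have : PresentedGroup.mk (raagRels G)
      (FreeGroup.of a * FreeGroup.of b * (FreeGroup.of a)⁻¹ * (FreeGroup.of b)⁻¹) = 1 :=
    (QuotientGroup.eq_one_iff _).mpr hr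
  simp only [map_mul, map_inv] at this
  exact this

theorem subgroup_intersection_closure {V : Type*} (G : SimpleGraph V) (P Q R : Set V)
    (hPQ : Disjoint P Q) (P₁ : Set (RAAG G))
    (hP₁ : P₁ ⊆ (Subgroup.closure (RAAG.gen G '' P) : Subgroup (RAAG G))) :
    Subgroup.closure (P₁ ∪ RAAG.gen G '' Q) ⊓ Subgroup.closure (RAAG.gen G '' R) ≤
      Subgroup.closure (P₁ ∪ RAAG.gen G '' (Q ∩ R)) ∧
    (P ⊆ R →
      Subgroup.closure (P₁ ∪ RAAG.gen G '' Q) ⊓ Subgroup.closure (RAAG.gen G '' R) =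
        Subgroup.closure (P₁ ∪ RAAG.gen G '' (Q ∩ R))) := by
  classical
  set f : V → RAAG G := fun v => if v ∈ Q \ R then 1 else RAAG.gen G v with hf
  have hrel : ∀ r ∈ raagRels G, FreeGroup.lift f r = 1 := by
    rintro r ⟨a, b, hab, rfl⟩
    simp only [map_mul, map_inv, FreeGroup.lift_apply_of, hf]
    by_cases ha : a ∈ Q \ R <;> by_cases hb : b ∈ Q \ R <;>
      simp [ha, hb, raag_gen_comm G hab]
  let π : RAAG G →* RAAG G := PresentedGroup.toGroup hrel
  have hπof : ∀ v : V, π (RAAG.gen G v) = f v := fun v => PresentedGroup.toGroup.of hrel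
  have hπfix : ∀ v : V, v ∉ Q \ R → π (RAAG.gen G v) = RAAG.gen G v := by
    intro v hv; rw [hπof]; simp only [hf, if_neg hv]
  -- π fixes closure of gen '' R pointwise
  have hfixR : ∀ x ∈ Subgroup.closure (RAAG.gen G '' R), π x = x := by
    intro x hx
    refine MonoidHom.eqOn_closure (f := π) (g := MonoidHom.id _) ?_ hx
    rintro y ⟨v, hv, rfl⟩
    exact hπfix v (fun h => h.2 hv)
  -- π fixes P₁ pointwise
  have hfixP : ∀ x ∈ P₁, π x = x := by
    intro x hx
    refine MonoidHom.eqOn_closure (f := π) (g := MonoidHom.id _) ?_ (hP₁ hx)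
    rintro y ⟨v, hv, rfl⟩
    exact hπfix v (fun h => hPQ.ne_of_mem hv h.1 rfl)
  have hmain : Subgroup.closure (P₁ ∪ RAAG.gen G '' Q) ⊓ Subgroup.closure (RAAG.gen G '' R) ≤
      Subgroup.closure (P₁ ∪ RAAG.gen G '' (Q ∩ R)) := by
    rintro g ⟨hg1, hg2⟩
    have hgeq : π g = g := hfixR g hg2
    have hmap : π g ∈ (Subgroup.closure (P₁ ∪ RAAG.gen G '' Q)).map π :=
      Subgroup.mem_map_of_mem π hg1
    rw [MonoidHom.map_closure] at hmap
    have hsub : π '' (P₁ ∪ RAAG.gen G '' Q) ⊆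
        (Subgroup.closure (P₁ ∪ RAAG.gen G '' (Q ∩ R)) : Set (RAAG G)) := by
      rintro y ⟨x, hx, rfl⟩
      rcases hx with hx | ⟨v, hv, rfl⟩
      · rw [hfixP x hx]; exact Subgroup.subset_closure (Or.inl hx)
      · by_cases hvR : v ∈ R
        · rw [hπfix v (fun h => h.2 hvR)]
          exact Subgroup.subset_closure (Or.inr ⟨v, ⟨hv, hvR⟩, rfl⟩)
        · rw [hπof]; simp only [hf, Set.mem_diff, hv, hvR, not_false_iff, and_self, if_pos]
          exact (Subgroup.closure _).one_mem
    have := (Subgroup.closure_le _).mpr hsub hmap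
    rwa [hgeq] at this
  refine ⟨hmain, fun hPR => le_antisymm hmain ?_⟩
  rw [le_inf_iff]
  constructor
  · exact Subgroup.closure_mono (Set.union_subset_union_right _
      (Set.image_mono Set.inter_subset_left))
  · rw [Subgroup.closure_le]
    rintro y (hy | ⟨v, hv, rfl⟩)
    · exact Subgroup.closure_mono (Set.image_mono hPR) (hP₁ hy)
    · exact Subgroup.subset_closure ⟨v, hv.2, rfl⟩
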